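/- arXiv:1804.09261 — 2 statements merged into one kernel-verified Lean document; each statement's English description precedes it below -/
import Mathlib

section
/- The function Ψ(x) = (1−|x|²)/(1+|x|²) on ℝ⁶ satisfies (−Δ)³Ψ = 720·Ψ·e^{6η}, where η(x) = log(2/(1+|x|²)). -/
/-!
For a radial function `g (‖x‖²)` on `ℝ⁶` one has `Δ g(‖x‖²) = 12 g'(s) + 4 s g''(s)`
with `s = ‖x‖²`. Starting from `Ψ = (1 - s) / (1 + s)`, each application of this operator
maps a profile `(a + b s) / (1 + s) ^ k` to another one of the same shape, with `k` raised
by two: `(1 - s)/(1 + s) ↦ -(24 + 8 s)/(1 + s)³ ↦ 768/(1 + s)⁵ ↦ 46080 (s - 1)/(1 + s)⁷`.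
Finally `46080 = 720 · 2⁶` and `e^{6η} = (2 / (1 + s))⁶`.
-/

open Real

/-- The Laplacian on `ℝ⁶`. -/
noncomputable def lap6 (f : EuclideanSpace ℝ (Fin 6) → ℝ) (x : EuclideanSpace ℝ (Fin 6)) : ℝ :=
  ∑ i : Fin 6, iteratedDeriv 2 (fun t : ℝ => f (x + t • EuclideanSpace.single i (1:ℝ))) 0

open RealInnerProductSpace

section LineRestriction

variable {E : Type*} [NormedAddCommGroup E] [InnerProductSpace ℝ E]

lemma hasDerivAt_norm_add_smul_sq (x v : E) (t : ℝ) :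
    HasDerivAt (fun t : ℝ => ‖x + t • v‖ ^ 2) (2 * ⟪x, v⟫ + 2 * ‖v‖ ^ 2 * t) t := by
  convert (((hasDerivAt_id' t).smul_const v).const_add x).norm_sq using 1
  rw [one_smul, inner_add_left, real_inner_smul_left, real_inner_self_eq_norm_sq]
  ring

lemma iteratedDeriv_two_comp_norm_add_smul_sq {g g' g'' : ℝ → ℝ}
    (hg : ∀ s, 0 ≤ s → HasDerivAt g (g' s) s) (hg' : ∀ s, 0 ≤ s → HasDerivAt g' (g'' s) s)
    (x v : E) :
    iteratedDeriv 2 (fun t : ℝ => g (‖x + t • v‖ ^ 2)) 0 =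
      4 * ⟪x, v⟫ ^ 2 * g'' (‖x‖ ^ 2) + 2 * ‖v‖ ^ 2 * g' (‖x‖ ^ 2) := by
  have hfirst : deriv (fun t : ℝ => g (‖x + t • v‖ ^ 2)) =
      fun t => g' (‖x + t • v‖ ^ 2) * (2 * ⟪x, v⟫ + 2 * ‖v‖ ^ 2 * t) :=
    funext fun t =>
      ((hg _ (sq_nonneg ‖x + t • v‖)).comp t (hasDerivAt_norm_add_smul_sq x v t)).deriv
  have hsecond :=
    ((hg' _ (sq_nonneg ‖x + (0 : ℝ) • v‖)).comp 0 (hasDerivAt_norm_add_smul_sq x v 0)).mul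
      (((hasDerivAt_id' (0 : ℝ)).const_mul (2 * ‖v‖ ^ 2)).const_add (2 * ⟪x, v⟫))
  rw [iteratedDeriv_succ, iteratedDeriv_one, hfirst]
  refine hsecond.deriv.trans ?_
  simp only [zero_smul, add_zero, mul_zero, Function.comp_apply, mul_one]
  ring

end LineRestriction

lemma lap6_comp_norm_sq {g g' g'' : ℝ → ℝ}
    (hg : ∀ s, 0 ≤ s → HasDerivAt g (g' s) s) (hg' : ∀ s, 0 ≤ s → HasDerivAt g' (g'' s) s)
    (x : EuclideanSpace ℝ (Fin 6)) :
    lap6 (fun y => g (‖y‖ ^ 2)) x = 12 * g' (‖x‖ ^ 2) + 4 * ‖x‖ ^ 2 * g'' (‖x‖ ^ 2) := by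
  have hline : ∀ i,
      ⟪x, EuclideanSpace.single i (1 : ℝ)⟫ = x i ∧ ‖EuclideanSpace.single i (1 : ℝ)‖ = 1 := by
    simp [EuclideanSpace.inner_single_right]
  simp only [lap6, iteratedDeriv_two_comp_norm_add_smul_sq hg hg', hline,
    Finset.sum_add_distrib]
  rw [← Finset.sum_mul, ← Finset.sum_mul, ← Finset.mul_sum, ← EuclideanSpace.real_norm_sq_eq]
  simp only [one_pow, mul_one, Finset.sum_const, Finset.card_univ, Fintype.card_fin, nsmul_eq_mul,
    Nat.cast_ofNat]
  ring

noncomputable def ratProfile (a b : ℝ) (k : ℕ) (s : ℝ) : ℝ := (a + b * s) / (1 + s) ^ k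

lemma hasDerivAt_ratProfile (a b : ℝ) (k : ℕ) {s : ℝ} (hs : 1 + s ≠ 0) :
    HasDerivAt (ratProfile a b k) (ratProfile (b - k * a) (b - k * b) (k + 1) s) s := by
  have hden : HasDerivAt (fun s : ℝ => (1 + s) ^ k) (k * (1 + s) ^ k / (1 + s)) s := by
    refine (((hasDerivAt_id' s).const_add 1).fun_pow k).congr_deriv ?_
    rcases k with _ | m
    · simp
    · rw [Nat.add_sub_cancel, pow_succ]
      field_simp
  refine ((((hasDerivAt_id' s).const_mul b).const_add a).div hden
    (pow_ne_zero k hs)).congr_deriv ?_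
  simp only [ratProfile]
  field_simp
  ring

/-- In general the numerator of the result has the extra term `4 (1 - k) (3 - k) b s²`;
`hk` removes it, so that the result is again of the form `(a' + b' s) / (1 + s) ^ k'`. -/
lemma lap6_ratProfile (a b : ℝ) (k : ℕ) (hk : (1 - k) * (3 - k) * b = 0) :
    lap6 (fun y => ratProfile a b k (‖y‖ ^ 2)) = fun y =>
      ratProfile (12 * (b - k * a)) ((8 - 4 * k) * (b - k * a) + 16 * (1 - k) * b) (k + 2)
        (‖y‖ ^ 2) := by
  have hs : ∀ s : ℝ, 0 ≤ s → 1 + s ≠ 0 := fun s h => by positivity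
  funext y
  rw [lap6_comp_norm_sq (fun s h => hasDerivAt_ratProfile a b k (hs s h))
    (fun s h => hasDerivAt_ratProfile _ _ (k + 1) (hs s h))]
  generalize ‖y‖ ^ 2 = s
  simp only [ratProfile, pow_succ]
  field_simp
  congr 1
  push_cast
  linear_combination (4 * s ^ 2) * hk

/-- The function `Ψ(x) = (1−|x|²)/(1+|x|²)` on `ℝ⁶` satisfies the linearized
Liouville equation `(−Δ)³Ψ = 720·Ψ·e^{6η}`, where `η(x) = log(2/(1+|x|²))`. -/
theorem stmt8 (Ψ η : EuclideanSpace ℝ (Fin 6) → ℝ)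
    (hΨ : ∀ x, Ψ x = (1 - ‖x‖^2) / (1 + ‖x‖^2))
    (hη : ∀ x, η x = Real.log (2 / (1 + ‖x‖^2))) :
    ∀ x, - lap6 (lap6 (lap6 Ψ)) x = 720 * Ψ x * Real.exp (6 * η x) := by
  have hΨ_profile : Ψ = fun y => ratProfile 1 (-1) 1 (‖y‖ ^ 2) := by
    funext y
    simp [hΨ, ratProfile, sub_eq_add_neg]
  have h1 : lap6 Ψ = fun y => ratProfile (-24) (-8) 3 (‖y‖ ^ 2) := by
    rw [hΨ_profile, lap6_ratProfile _ _ _ (by norm_num)]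
    norm_num
  have h2 : lap6 (lap6 Ψ) = fun y => ratProfile 768 0 5 (‖y‖ ^ 2) := by
    rw [h1, lap6_ratProfile _ _ _ (by norm_num)]
    norm_num
  have h3 : lap6 (lap6 (lap6 Ψ)) = fun y => ratProfile (-46080) 46080 7 (‖y‖ ^ 2) := by
    rw [h2, lap6_ratProfile _ _ _ (by norm_num)]
    norm_num
  intro x
  have hx : 0 < 1 + ‖x‖ ^ 2 := by positivity
  have hexp : rexp (6 * log (2 / (1 + ‖x‖ ^ 2))) = (2 / (1 + ‖x‖ ^ 2)) ^ 6 := by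
    rw [← Real.exp_log (pow_pos (div_pos two_pos hx) 6), Real.log_pow]
    norm_num
  rw [h3, hΨ, hη, hexp]
  simp only [ratProfile]
  field_simp
  ring
end

section
/- For the radial functions ψ(r) = ar² + br⁴ − α·log r + o(log r) and Ψ(r) = −1 + 2/r² + o(r⁻²) on ℝ⁶ (with all derivative expansions as specified), the boundary bilinear form ∫_{∂B_r}(ψ(Δ²Ψ)' − ψ'Δ²Ψ + Δψ(ΔΨ)' − (Δψ)'ΔΨ + Δ²ψ·Ψ' − (Δ²ψ)'·Ψ)dσ tends to a limit as r → ∞ which vanishes if and only if α = 6a + 48b. -/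
/-!
Write every profile as its main part plus its error. In each of the six products the error of
one factor multiplies the main part (or the error) of the other, and the orders always combine
to `o(r⁻⁵)`, so after multiplying by `r⁵` only the products of main parts survive. Those are
explicit: the divergent `r²` terms cancel between `Δψ (ΔΨ)' − (Δψ)' ΔΨ` and `Δ²ψ Ψ'`, and
`r⁵` times the rest is `384a + 3072b − 64α + O(r⁻²)`. The limit is `π³` times
`64 (6a + 48b − α)`.
-/

open Real Filter Asymptotics Topology

theorem Asymptotics.IsLittleO.mul_sub_mul {α R : Type*} [NormedRing R] [NormMulClass R]
    {l : Filter α} {u U v V gu gv su sv w : α → R}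
    (hu : (fun x => u x - U x) =o[l] gu) (hU : U =O[l] su)
    (hv : (fun x => v x - V x) =o[l] gv) (hV : V =O[l] sv)
    (h₁ : (fun x => su x * gv x) =O[l] w) (h₂ : (fun x => gu x * sv x) =O[l] w)
    (h₃ : (fun x => gu x * gv x) =O[l] w) :
    (fun x => u x * v x - U x * V x) =o[l] w := by
  have split : (fun x => u x * v x - U x * V x) = fun x =>
      U x * (v x - V x) + (u x - U x) * V x + (u x - U x) * (v x - V x) := by
    funext x
    noncomm_ring
  rw [split]
  exact (((hU.mul_isLittleO hv).trans_isBigO h₁).add ((hu.mul_isBigO hV).trans_isBigO h₂)).add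
    ((hu.mul hv).trans_isBigO h₃)

theorem isBigO_zpow_zpow_atTop {m n : ℤ} (h : m ≤ n) :
    (fun r : ℝ => r ^ m) =O[atTop] fun r => r ^ n := by
  refine IsBigO.of_bound 1 ?_
  filter_upwards [eventually_ge_atTop 1] with r hr
  have h0 : 0 ≤ r := by linarith
  simp only [norm_eq_abs, abs_of_nonneg (zpow_nonneg h0 _), one_mul]
  exact zpow_le_zpow_right₀ hr h

theorem isBigO_zpow_mul_zpow_atTop {m n k : ℤ} (h : m + n ≤ k) :
    (fun r : ℝ => r ^ m * r ^ n) =O[atTop] fun r => r ^ k := by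
  refine (isBigO_zpow_zpow_atTop h).congr' ?_ EventuallyEq.rfl
  filter_upwards [eventually_ne_atTop 0] with r hr
  rw [zpow_add₀ hr]

theorem Asymptotics.IsLittleO.mul_sub_mul_zpow {u U v V : ℝ → ℝ} {eu mu ev mv k : ℤ}
    (hu : (fun r => u r - U r) =o[atTop] fun r => r ^ eu) (hU : U =O[atTop] fun r => r ^ mu)
    (hv : (fun r => v r - V r) =o[atTop] fun r => r ^ ev) (hV : V =O[atTop] fun r => r ^ mv)
    (h₁ : mu + ev ≤ k := by norm_num) (h₂ : eu + mv ≤ k := by norm_num)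
    (h₃ : eu + ev ≤ k := by norm_num) :
    (fun r => u r * v r - U r * V r) =o[atTop] fun r => r ^ k :=
  hu.mul_sub_mul hU hv hV (isBigO_zpow_mul_zpow_atTop h₁) (isBigO_zpow_mul_zpow_atTop h₂)
    (isBigO_zpow_mul_zpow_atTop h₃)

theorem isBigO_const_zpow_atTop (c : ℝ) {m : ℤ} (h : 0 ≤ m := by norm_num) :
    (fun _ : ℝ => c) =O[atTop] fun r => r ^ m :=
  (isBigO_const_const c one_ne_zero atTop).trans
    ((isBigO_zpow_zpow_atTop h).congr_left fun r => zpow_zero r)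

theorem isBigO_const_mul_pow_zpow_atTop (c : ℝ) {n : ℕ} {m : ℤ} (h : (n : ℤ) ≤ m := by norm_num) :
    (fun r : ℝ => c * r ^ n) =O[atTop] fun r => r ^ m :=
  ((isBigO_zpow_zpow_atTop h).congr_left fun r => zpow_natCast r n).const_mul_left c

theorem isBigO_const_mul_zpow_atTop (c : ℝ) {m : ℤ} (h : 1 ≤ m := by norm_num) :
    (fun r : ℝ => c * r) =O[atTop] fun r => r ^ m := by
  simpa using isBigO_const_mul_pow_zpow_atTop c (n := 1) h

theorem isBigO_const_div_pow_zpow_atTop (c : ℝ) {n : ℕ} {m : ℤ}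
    (h : -(n : ℤ) ≤ m := by norm_num) :
    (fun r : ℝ => c / r ^ n) =O[atTop] fun r => r ^ m :=
  ((isBigO_zpow_zpow_atTop h).congr_left fun r => by rw [zpow_neg, zpow_natCast]).const_mul_left c
    |>.congr_left fun r => (div_eq_mul_inv c (r ^ n)).symm

theorem isBigO_const_div_zpow_atTop (c : ℝ) {m : ℤ} (h : -1 ≤ m := by norm_num) :
    (fun r : ℝ => c / r) =O[atTop] fun r => r ^ m := by
  simpa using isBigO_const_div_pow_zpow_atTop c (n := 1) h

theorem isBigO_log_zpow_atTop {m : ℤ} (h : 1 ≤ m := by norm_num) :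
    log =O[atTop] fun r => r ^ m :=
  isLittleO_log_id_atTop.isBigO.trans ((isBigO_zpow_zpow_atTop h).congr_left fun r => zpow_one r)

theorem Asymptotics.IsLittleO.zpow_of_one_div_pow {f : ℝ → ℝ} {n : ℕ}
    (h : f =o[atTop] fun r => 1 / r ^ n) : f =o[atTop] fun r => r ^ (-(n : ℤ)) := by
  simpa [zpow_neg] using h

theorem Asymptotics.IsLittleO.zpow_of_one_div {f : ℝ → ℝ}
    (h : f =o[atTop] fun r => 1 / r) : f =o[atTop] fun r => r ^ (-1 : ℤ) := by
  simpa using h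

theorem tendsto_pow_mul_of_isLittleO_zpow {f : ℝ → ℝ} {n : ℕ}
    (h : f =o[atTop] fun r => r ^ (-(n : ℤ))) : Tendsto (fun r => r ^ n * f r) atTop (𝓝 0) := by
  refine h.tendsto_div_nhds_zero.congr fun r => ?_
  rw [zpow_neg, zpow_natCast, div_inv_eq_mul, mul_comm]

theorem tendsto_boundaryForm_main (a b α : ℝ) :
    Tendsto (fun r : ℝ => r ^ 5 *
      ((a*r^2 + b*r^4 - α * log r) * (-7680/r^11) - (2*a*r + 4*b*r^3 - α/r) * (768/r^10)
        + (12*a + 32*b*r^2 - 4*α/r^2) * (32/r^5 - 192/r^9) - (64*b*r + 8*α/r^3) * (-8/r^4 + 24/r^8)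
        + (384*b + 16*α/r^4) * (-4/r^3 + 8/r^5) - (-64*α/r^5) * (-1 + 2/r^2)))
      atTop (𝓝 (384*a + 3072*b - 64*α)) := by
  have hinv : Tendsto (fun r : ℝ => r⁻¹) atTop (𝓝 0) := tendsto_inv_atTop_zero
  have hlog : Tendsto (fun r => log r * r⁻¹) atTop (𝓝 0) := by
    simpa [div_eq_mul_inv] using isLittleO_log_id_atTop.tendsto_div_nhds_zero
  have hlim : Tendsto (fun r : ℝ => 384*a + 3072*b - 64*α - 18432*b * r⁻¹ ^ 2
      + (128*α - 11520*a) * r⁻¹ ^ 4 + 1344*α * r⁻¹ ^ 6 + 7680*α * (log r * r⁻¹) * r⁻¹ ^ 5)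
      atTop (𝓝 (384*a + 3072*b - 64*α)) := by
    simpa using ((((tendsto_const_nhds.sub ((hinv.pow 2).const_mul _)).add
      ((hinv.pow 4).const_mul _)).add ((hinv.pow 6).const_mul _)).add
      ((hlog.const_mul _).mul (hinv.pow 5)))
  refine hlim.congr' ?_
  filter_upwards [eventually_gt_atTop 0] with r hr
  field_simp
  ring

/-- The balancing identity for the boundary bilinear form: given radial profiles
`ψ, Ψ : ℝ → ℝ` on `ℝ⁶` with the asymptotic expansions
`ψ(r) = ar² + br⁴ − α log r + o(log r)`, `Ψ(r) = −1 + 2/r² + o(r⁻²)` (and the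
corresponding expansions for the radial derivatives and the iterated radial
Laplacians, as specified), the boundary form
`∫_{∂B_r}(ψ(Δ²Ψ)' − ψ'Δ²Ψ + Δψ(ΔΨ)' − (Δψ)'ΔΨ + Δ²ψΨ' − (Δ²ψ)'Ψ)dσ = ω₅r⁵·(…)`
with `ω₅ = π³` tends to a limit as `r → ∞`, and this limit vanishes if and only if
`α = 6a + 48b`. -/
theorem stmt15 (a b α : ℝ)
    (ψ ψ' Lψ Lψ' LLψ LLψ' Ψ Ψ' LΨ LΨ' LLΨ LLΨ' : ℝ → ℝ)
    (hψ : (fun r => ψ r - (a*r^2 + b*r^4 - α * Real.log r)) =o[atTop] Real.log)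
    (hψ' : (fun r => ψ' r - (2*a*r + 4*b*r^3 - α/r)) =o[atTop] (fun r => 1/r))
    (hLψ : (fun r => Lψ r - (12*a + 32*b*r^2 - 4*α/r^2)) =o[atTop] (fun r => 1/r^2))
    (hLψ' : (fun r => Lψ' r - (64*b*r + 8*α/r^3)) =o[atTop] (fun r => 1/r^3))
    (hLLψ : (fun r => LLψ r - (384*b + 16*α/r^4)) =o[atTop] (fun r => 1/r^4))
    (hLLψ' : (fun r => LLψ' r - (-64*α/r^5)) =o[atTop] (fun r => 1/r^5))
    (hΨ : (fun r => Ψ r - (-1 + 2/r^2)) =o[atTop] (fun r => 1/r^2))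
    (hΨ' : (fun r => Ψ' r - (-4/r^3 + 8/r^5)) =o[atTop] (fun r => 1/r^5))
    (hLΨ : (fun r => LΨ r - (-8/r^4 + 24/r^8)) =o[atTop] (fun r => 1/r^8))
    (hLΨ' : (fun r => LΨ' r - (32/r^5 - 192/r^9)) =o[atTop] (fun r => 1/r^9))
    (hLLΨ : (fun r => LLΨ r - 768/r^10) =o[atTop] (fun r => 1/r^10))
    (hLLΨ' : (fun r => LLΨ' r - (-7680/r^11)) =o[atTop] (fun r => 1/r^11)) :
    ∃ L : ℝ,
      Tendsto (fun r => π^3 * r^5 *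
          (ψ r * LLΨ' r - ψ' r * LLΨ r + Lψ r * LΨ' r - Lψ' r * LΨ r
            + LLψ r * Ψ' r - LLψ' r * Ψ r)) atTop (nhds L)
        ∧ (L = 0 ↔ α = 6*a + 48*b) := by
  refine ⟨π ^ 3 * (384*a + 3072*b - 64*α), ?_, ?_⟩
  · -- `(m := k)` is the order `r ^ k` of a main part; the error `o(log r)` of `ψ` is coarsened to `o(r)`.
    have e₁ := (hψ.trans_isBigO (isBigO_log_zpow_atTop (m := 1))).mul_sub_mul_zpow (k := -5)
      (((isBigO_const_mul_pow_zpow_atTop a (m := 4)).add (isBigO_const_mul_pow_zpow_atTop b)).sub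
        ((isBigO_log_zpow_atTop).const_mul_left α))
      hLLΨ'.zpow_of_one_div_pow (isBigO_const_div_pow_zpow_atTop _ (m := -11))
    have e₂ := hψ'.zpow_of_one_div.mul_sub_mul_zpow (k := -5)
      (((isBigO_const_mul_zpow_atTop _ (m := 3)).add (isBigO_const_mul_pow_zpow_atTop _)).sub
        (isBigO_const_div_zpow_atTop _))
      hLLΨ.zpow_of_one_div_pow (isBigO_const_div_pow_zpow_atTop _ (m := -10))
    have e₃ := hLψ.zpow_of_one_div_pow.mul_sub_mul_zpow (k := -5)
      (((isBigO_const_zpow_atTop _ (m := 2)).add (isBigO_const_mul_pow_zpow_atTop _)).sub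
        (isBigO_const_div_pow_zpow_atTop _))
      hLΨ'.zpow_of_one_div_pow
      ((isBigO_const_div_pow_zpow_atTop _ (m := -5)).sub (isBigO_const_div_pow_zpow_atTop _))
    have e₄ := hLψ'.zpow_of_one_div_pow.mul_sub_mul_zpow (k := -5)
      ((isBigO_const_mul_zpow_atTop _ (m := 1)).add (isBigO_const_div_pow_zpow_atTop _))
      hLΨ.zpow_of_one_div_pow
      ((isBigO_const_div_pow_zpow_atTop _ (m := -4)).add (isBigO_const_div_pow_zpow_atTop _))
    have e₅ := hLLψ.zpow_of_one_div_pow.mul_sub_mul_zpow (k := -5)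
      ((isBigO_const_zpow_atTop _ (m := 0)).add (isBigO_const_div_pow_zpow_atTop _))
      hΨ'.zpow_of_one_div_pow
      ((isBigO_const_div_pow_zpow_atTop _ (m := -3)).add (isBigO_const_div_pow_zpow_atTop _))
    have e₆ := hLLψ'.zpow_of_one_div_pow.mul_sub_mul_zpow (k := -5)
      (isBigO_const_div_pow_zpow_atTop _ (m := -5)) hΨ.zpow_of_one_div_pow
      ((isBigO_const_zpow_atTop _ (m := 0)).add (isBigO_const_div_pow_zpow_atTop _))
    have hlim := ((tendsto_boundaryForm_main a b α).add (tendsto_pow_mul_of_isLittleO_zpow (n := 5)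
      (((((e₁.sub e₂).add e₃).sub e₄).add e₅).sub e₆))).const_mul (π ^ 3)
    rw [add_zero] at hlim
    exact hlim.congr fun r => by ring
  · simp only [mul_eq_zero, pow_eq_zero_iff, ne_eq, OfNat.ofNat_ne_zero, not_false_eq_true,
      pi_ne_zero, false_or]
    constructor <;> intro h <;> linarith
end
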